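/- arXiv:1601.06672 — 2 statements merged into one kernel-verified Lean document; each statement's English description precedes it below -/
import Mathlib

section
/- Let Q ⊆ ℝⁿ be a nonempty compact set and let p, q : ℝⁿ → ℝ be continuous with q(x) > 0 for all x ∈ Q. Then the infimum over x ∈ Q of p(x)/q(x) equals the infimum, over all finite Borel measures μ on ℝⁿ supported in Q satisfying ∫ q dμ = 1, of ∫ p dμ; moreover both infima are attained. -/
open MeasureTheory

/-! The ratio `p / q` attains its minimum `m` on the compact set `Q` at some `x₀`, and the Dirac
mass at `x₀` rescaled by `1 / q x₀` is admissible with `∫ p = m`. Conversely `m * q ≤ p` on `Q`,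
so integrating against any admissible `μ` gives `m = m * ∫ q dμ ≤ ∫ p dμ`. -/

section Concentrated

variable {X : Type*} [MeasurableSpace X] {μ : Measure X} {Q : Set X}

theorem MeasureTheory.IntegrableOn.integrable_of_measure_compl_eq_zero {E : Type*}
    [NormedAddCommGroup E] {f : X → E} (hf : IntegrableOn f Q μ) (hμ : μ Qᶜ = 0) :
    Integrable f μ := by
  rwa [IntegrableOn, Measure.restrict_eq_self_of_ae_mem (mem_ae_iff.mpr hμ)] at hf

theorem le_integral_of_mul_le_of_measure_compl_eq_zero {p q : X → ℝ} {m : ℝ} (hμ : μ Qᶜ = 0)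
    (hp : Integrable p μ) (hq : Integrable q μ) (hq1 : ∫ x, q x ∂μ = 1)
    (h : ∀ x ∈ Q, m * q x ≤ p x) : m ≤ ∫ x, p x ∂μ :=
  calc m = ∫ x, m * q x ∂μ := by rw [integral_const_mul, hq1, mul_one]
    _ ≤ ∫ x, p x ∂μ :=
      integral_mono_ae (hq.const_mul m) hp (Filter.mem_of_superset (mem_ae_iff.mpr hμ) h)

end Concentrated

def momentValues {X : Type*} [MeasurableSpace X] (Q : Set X) (p q : X → ℝ) : Set ℝ :=
  {r | ∃ μ : Measure X, IsFiniteMeasure μ ∧ μ Qᶜ = 0 ∧ ∫ x, q x ∂μ = 1 ∧ r = ∫ x, p x ∂μ}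

theorem mem_momentValues_div {X : Type*} [MeasurableSpace X] [MeasurableSingletonClass X]
    {Q : Set X} {p q : X → ℝ} {x₀ : X} (hx₀ : x₀ ∈ Q) (hq₀ : 0 < q x₀) :
    p x₀ / q x₀ ∈ momentValues Q p q := by
  have hint (f : X → ℝ) :
      ∫ x, f x ∂((q x₀).toNNReal⁻¹ • Measure.dirac x₀) = (q x₀)⁻¹ * f x₀ := by
    rw [integral_smul_nnreal_measure, integral_dirac, NNReal.smul_def, NNReal.coe_inv,
      Real.coe_toNNReal _ hq₀.le, smul_eq_mul]
  refine ⟨(q x₀).toNNReal⁻¹ • Measure.dirac x₀, inferInstance, ?_, ?_, ?_⟩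
  · simp [Measure.dirac_apply, hx₀]
  · rw [hint, inv_mul_cancel₀ hq₀.ne']
  · rw [hint, inv_mul_eq_div]

theorem isLeast_momentValues {X : Type*} [TopologicalSpace X] [T2Space X] [MeasurableSpace X]
    [OpensMeasurableSpace X] {Q : Set X} {p q : X → ℝ} (hQ : IsCompact Q)
    (hp : ContinuousOn p Q) (hq : ContinuousOn q Q) (hqpos : ∀ x ∈ Q, 0 < q x)
    {x₀ : X} (hx₀ : x₀ ∈ Q) (hmin : IsMinOn (fun x => p x / q x) Q x₀) :
    IsLeast (momentValues Q p q) (p x₀ / q x₀) := by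
  refine ⟨mem_momentValues_div hx₀ (hqpos x₀ hx₀), ?_⟩
  rintro _ ⟨μ, hμfin, hμ, hq1, rfl⟩
  exact le_integral_of_mul_le_of_measure_compl_eq_zero hμ
    ((hp.integrableOn_compact hQ).integrable_of_measure_compl_eq_zero hμ)
    ((hq.integrableOn_compact hQ).integrable_of_measure_compl_eq_zero hμ) hq1
    fun x hx => (le_div_iff₀ (hqpos x hx)).mp (hmin hx)

/-- For a nonempty compact `Q ⊆ ℝⁿ` and continuous `p, q : ℝⁿ → ℝ`
with `q > 0` on `Q`, the infimum over `x ∈ Q` of `p(x) / q(x)` equals the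
infimum of `∫ p dμ` over all finite Borel measures `μ` supported in `Q` with
`∫ q dμ = 1`; moreover both infima are attained. -/
theorem inf_fractional_eq_inf_moment
    (n : ℕ) (Q : Set (EuclideanSpace ℝ (Fin n))) (hQne : Q.Nonempty)
    (hQcomp : IsCompact Q) (p q : EuclideanSpace ℝ (Fin n) → ℝ)
    (hp : Continuous p) (hq : Continuous q) (hqpos : ∀ x ∈ Q, 0 < q x) :
    sInf ((fun x => p x / q x) '' Q)
        = sInf {r : ℝ | ∃ μ : Measure (EuclideanSpace ℝ (Fin n)),
            IsFiniteMeasure μ ∧ μ Qᶜ = 0 ∧ (∫ x, q x ∂μ) = 1 ∧ r = ∫ x, p x ∂μ}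
      ∧ (∃ x ∈ Q, p x / q x = sInf ((fun x => p x / q x) '' Q))
      ∧ (∃ μ : Measure (EuclideanSpace ℝ (Fin n)),
            IsFiniteMeasure μ ∧ μ Qᶜ = 0 ∧ (∫ x, q x ∂μ) = 1
              ∧ (∫ x, p x ∂μ)
                = sInf {r : ℝ | ∃ μ : Measure (EuclideanSpace ℝ (Fin n)),
                    IsFiniteMeasure μ ∧ μ Qᶜ = 0 ∧ (∫ x, q x ∂μ) = 1
                      ∧ r = ∫ x, p x ∂μ}) := by
  obtain ⟨x₀, hx₀, hmin⟩ := hQcomp.exists_isMinOn hQne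
    (hp.continuousOn.div hq.continuousOn fun x hx => (hqpos x hx).ne')
  have hfrac : sInf ((fun x => p x / q x) '' Q) = p x₀ / q x₀ :=
    IsLeast.csInf_eq ⟨Set.mem_image_of_mem _ hx₀, Set.forall_mem_image.2 hmin⟩
  have hmoment := isLeast_momentValues hQcomp hp.continuousOn hq.continuousOn hqpos hx₀ hmin
  obtain ⟨μ₀, hμ₀fin, hμ₀, hq1, hp₀⟩ := hmoment.1
  exact ⟨hfrac.trans hmoment.csInf_eq.symm, ⟨x₀, hx₀, hfrac.symm⟩,
    μ₀, hμ₀fin, hμ₀, hq1, hp₀.symm.trans hmoment.csInf_eq.symm⟩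
end

section
/- Let i ≥ 1 be an integer, let Q = [0,1] × [0,1] ⊆ ℝ², and consider the grid configuration of k = i² points x_{(a,b)} = ((2a+1)/(2i), (2b+1)/(2i)) for a, b ∈ {0, 1, …, i−1}. Then for every grid point u, min{ infDist(x_u, frontier Q), (1/2) · min_{v ≠ u} ‖x_u − x_v‖ } = 1/(2i); consequently the social cost of the grid configuration is C(grid) = max_u max{ 1 / infDist(x_u, frontier Q), 2 / min_{v ≠ u} ‖x_u − x_v‖ } = 2i, and hence the socially optimal cost for i² cars in the unit square satisfies C* ≤ 2i. -/
/-
Every grid point is at distance at least `1/(2i)` from each side of the square, and distinct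
grid points are at least `1/i` apart, so every term in the minimum defining `sm` is at least
`1/(2i)`. The value `1/(2i)` is attained: by the left side of the square for a point in the
first column, by the left neighbour otherwise. The cost at a point is the reciprocal of its
`sm`-value (the two sets correspond under `t ↦ 1/t`), hence equals `2i` at every point.
-/

/-- The unit square `[0,1] × [0,1] ⊆ ℝ²`. -/
def unitSquare : Set (EuclideanSpace ℝ (Fin 2)) :=
  {p | p 0 ∈ Set.Icc (0 : ℝ) 1 ∧ p 1 ∈ Set.Icc (0 : ℝ) 1}

/-- The `i × i` grid configuration of `k = i²` points
`x_{(a,b)} = ((2a+1)/(2i), (2b+1)/(2i))`. -/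
noncomputable def gridConfig (i : ℕ) : Fin i × Fin i → EuclideanSpace ℝ (Fin 2) :=
  fun ab => (WithLp.equiv 2 (Fin 2 → ℝ)).symm
    ![(2 * (ab.1 : ℝ) + 1) / (2 * i), (2 * (ab.2 : ℝ) + 1) / (2 * i)]

/-- `sm(x, u)`: the minimum of the set consisting of the distance from `x u` to
the boundary of the unit square together with the halved distances
`(1/2) ‖x u - x v‖` to all other cars `v ≠ u`. -/
noncomputable def smVal {ι : Type*} (x : ι → EuclideanSpace ℝ (Fin 2)) (u : ι) : ℝ :=
  sInf (insert (Metric.infDist (x u) (frontier unitSquare))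
    {d : ℝ | ∃ v, v ≠ u ∧ d = (1 / 2) * ‖x u - x v‖})

/-- The social cost `C(x) = max_u max{1 / infDist(x^u, frontier Q),
2 / min_{v ≠ u} ‖x^u - x^v‖}` of a configuration in the unit square, the inner
maximum being taken over the set consisting of the reciprocal boundary distance
together with the reciprocal distances to all other cars. -/
noncomputable def socialCostSquare {ι : Type*}
    (x : ι → EuclideanSpace ℝ (Fin 2)) : ℝ :=
  ⨆ u, sSup (insert (1 / Metric.infDist (x u) (frontier unitSquare))
    {d : ℝ | ∃ v, v ≠ u ∧ d = 2 / ‖x u - x v‖})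

open Set Metric

lemma interior_unitSquare :
    interior unitSquare = {p | p 0 ∈ Ioo (0 : ℝ) 1 ∧ p 1 ∈ Ioo (0 : ℝ) 1} := by
  have h (j : Fin 2) :=
    (PiLp.isOpenMap_apply 2 (fun _ : Fin 2 => ℝ) j).preimage_interior_eq_interior_preimage
      (PiLp.continuous_apply 2 (fun _ : Fin 2 => ℝ) j) (Icc (0 : ℝ) 1)
  change interior ((fun p : EuclideanSpace ℝ (Fin 2) => p 0) ⁻¹' Icc 0 1 ∩
    (fun p : EuclideanSpace ℝ (Fin 2) => p 1) ⁻¹' Icc 0 1) = _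
  rw [interior_inter, ← h, ← h, interior_Icc]
  rfl

lemma isClosed_unitSquare : IsClosed unitSquare :=
  (isClosed_Icc.preimage (PiLp.continuous_apply 2 _ 0)).inter
    (isClosed_Icc.preimage (PiLp.continuous_apply 2 _ 1))

lemma frontier_unitSquare :
    frontier unitSquare =
      unitSquare \ {p | p 0 ∈ Ioo (0 : ℝ) 1 ∧ p 1 ∈ Ioo (0 : ℝ) 1} := by
  rw [frontier, isClosed_unitSquare.closure_eq, interior_unitSquare]

lemma infDist_frontier_unitSquare_le {p : EuclideanSpace ℝ (Fin 2)} (hp : p ∈ unitSquare) :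
    infDist p (frontier unitSquare) ≤ p 0 := by
  have hq : !₂[0, p 1] ∈ frontier unitSquare := by
    rw [frontier_unitSquare]
    exact ⟨⟨by simp, by simpa using hp.2⟩, fun h => by simp at h⟩
  calc infDist p (frontier unitSquare) ≤ dist p !₂[0, p 1] := infDist_le_dist_of_mem hq
    _ = p 0 := by simp [EuclideanSpace.dist_eq, Real.dist_eq, hp.1.1]

lemma le_infDist_frontier_unitSquare {p : EuclideanSpace ℝ (Fin 2)} {c : ℝ}
    (hp : ∀ j, c ≤ p j ∧ p j ≤ 1 - c) : c ≤ infDist p (frontier unitSquare) := by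
  have hne : (frontier unitSquare).Nonempty := by
    refine ⟨!₂[0, 0], ?_⟩
    rw [frontier_unitSquare]
    exact ⟨⟨by simp, by simp⟩, fun h => by simp at h⟩
  rw [le_infDist hne, frontier_unitSquare]
  rintro q ⟨hq, hq_int⟩
  obtain ⟨j, hqj, hqj'⟩ : ∃ j, q j ∈ Icc (0 : ℝ) 1 ∧ q j ∉ Ioo (0 : ℝ) 1 := by
    by_contra! h
    exact hq_int ⟨h 0 hq.1, h 1 hq.2⟩
  have hedge : q j = 0 ∨ q j = 1 := by
    by_contra! h
    exact hqj' ⟨lt_of_le_of_ne hqj.1 (Ne.symm h.1), lt_of_le_of_ne hqj.2 h.2⟩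
  obtain ⟨hpj, hpj'⟩ := hp j
  calc c ≤ |p j - q j| := by
        rcases hedge with h | h <;> rw [h, le_abs] <;> [left; right] <;> linarith
    _ ≤ dist p q := PiLp.dist_apply_le p q j

lemma csSup_image_one_div {s : Set ℝ} (hne : s.Nonempty) (hs : s.Finite) (hpos : 0 < sInf s) :
    sSup ((fun t => 1 / t) '' s) = 1 / sInf s := by
  refine IsGreatest.csSup_eq ⟨mem_image_of_mem _ (hne.csInf_mem hs), ?_⟩
  rintro _ ⟨t, ht, rfl⟩
  exact one_div_le_one_div_of_le hpos (csInf_le hs.bddBelow ht)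

section
variable {ι : Type*} (x : ι → EuclideanSpace ℝ (Fin 2))

lemma socialCostSquare_eq_iSup_one_div_smVal [Finite ι] (hx : ∀ u, 0 < smVal x u) :
    socialCostSquare x = ⨆ u, 1 / smVal x u := by
  refine iSup_congr fun u => ?_
  have hfin : {d : ℝ | ∃ v, v ≠ u ∧ d = (1 / 2) * ‖x u - x v‖}.Finite :=
    (finite_range fun v => (1 / 2) * ‖x u - x v‖).subset
      fun _ ⟨v, _, hd⟩ => ⟨v, hd.symm⟩
  rw [smVal, ← csSup_image_one_div (insert_nonempty _ _) (hfin.insert _) (hx u), image_insert_eq]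
  congr 2
  have h2 (a : ℝ) : 1 / ((1 / 2) * a) = 2 / a := by rw [one_div_mul_eq_div, one_div_div]
  ext d
  constructor
  · rintro ⟨v, hv, rfl⟩
    exact ⟨_, ⟨v, hv, rfl⟩, h2 _⟩
  · rintro ⟨_, ⟨v, hv, rfl⟩, rfl⟩
    exact ⟨v, hv, h2 _⟩

lemma socialCostSquare_nonneg : 0 ≤ socialCostSquare x := by
  refine Real.iSup_nonneg fun u => Real.sSup_nonneg ?_
  rintro d (rfl | ⟨v, -, rfl⟩)
  · exact one_div_nonneg.2 infDist_nonneg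
  · positivity

end

noncomputable def gridCoord (i a : ℕ) : ℝ := (2 * a + 1) / (2 * i)

section Grid
variable {i : ℕ}

lemma gridCoord_mem_Icc {a : ℕ} (ha : a < i) :
    gridCoord i a ∈ Icc (1 / (2 * i : ℝ)) (1 - 1 / (2 * i)) := by
  have hi : (0 : ℝ) < i := by exact_mod_cast Nat.zero_lt_of_lt ha
  have ha' : (a : ℝ) + 1 ≤ i := by exact_mod_cast ha
  rw [gridCoord, mem_Icc, div_le_div_iff_of_pos_right (by positivity), one_sub_div (by positivity),
    div_le_div_iff_of_pos_right (by positivity)]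
  constructor <;> linarith

lemma gridCoord_sub_gridCoord (a b : ℕ) : gridCoord i a - gridCoord i b = (a - b) / i := by
  unfold gridCoord; ring

lemma gridConfig_apply_zero (u : Fin i × Fin i) : gridConfig i u 0 = gridCoord i u.1 := rfl

lemma gridConfig_apply_one (u : Fin i × Fin i) : gridConfig i u 1 = gridCoord i u.2 := rfl

lemma gridConfig_mem_unitSquare (u : Fin i × Fin i) : gridConfig i u ∈ unitSquare := by
  have hsub : Icc (1 / (2 * i : ℝ)) (1 - 1 / (2 * i)) ⊆ Icc 0 1 :=
    Icc_subset_Icc (by positivity) (sub_le_self _ (by positivity))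
  exact ⟨hsub (gridCoord_mem_Icc u.1.isLt), hsub (gridCoord_mem_Icc u.2.isLt)⟩

lemma one_div_le_infDist_gridConfig (u : Fin i × Fin i) :
    1 / (2 * i) ≤ infDist (gridConfig i u) (frontier unitSquare) :=
  le_infDist_frontier_unitSquare fun j => by
    fin_cases j
    exacts [gridCoord_mem_Icc u.1.isLt, gridCoord_mem_Icc u.2.isLt]

lemma one_div_le_abs_gridCoord_sub {a b : ℕ} (hab : a ≠ b) :
    1 / (i : ℝ) ≤ |gridCoord i a - gridCoord i b| := by
  rw [gridCoord_sub_gridCoord, abs_div, Nat.abs_cast]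
  gcongr
  have h : (1 : ℤ) ≤ |(a : ℤ) - b| := Int.one_le_abs (sub_ne_zero.2 (by exact_mod_cast hab))
  exact_mod_cast h

lemma one_div_le_norm_gridConfig_sub {u v : Fin i × Fin i} (huv : u ≠ v) :
    1 / (i : ℝ) ≤ ‖gridConfig i u - gridConfig i v‖ := by
  have hcoord (j : Fin 2) :
      |gridConfig i u j - gridConfig i v j| ≤ ‖gridConfig i u - gridConfig i v‖ := by
    simpa only [PiLp.sub_apply, Real.norm_eq_abs] using
      PiLp.norm_apply_le (gridConfig i u - gridConfig i v) j
  obtain h | h : (u.1 : ℕ) ≠ v.1 ∨ (u.2 : ℕ) ≠ v.2 := by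
    by_contra! h
    exact huv (Prod.ext (Fin.ext h.1) (Fin.ext h.2))
  exacts [(one_div_le_abs_gridCoord_sub h).trans (hcoord 0),
    (one_div_le_abs_gridCoord_sub h).trans (hcoord 1)]

lemma norm_gridConfig_sub_of_eq_add_one {a a' b : Fin i} (ha : (a : ℕ) = a' + 1) :
    ‖gridConfig i (a, b) - gridConfig i (a', b)‖ = 1 / i := by
  rw [EuclideanSpace.norm_eq, Fin.sum_univ_two]
  simp [gridConfig_apply_zero, gridConfig_apply_one, gridCoord_sub_gridCoord, ha]

lemma smVal_gridConfig (u : Fin i × Fin i) : smVal (gridConfig i) u = 1 / (2 * i) := by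
  refine IsLeast.csInf_eq ⟨?_, ?_⟩
  · by_cases hu : (u.1 : ℕ) = 0
    · refine .inl (le_antisymm ?_ (one_div_le_infDist_gridConfig u)).symm
      calc infDist (gridConfig i u) (frontier unitSquare) ≤ gridConfig i u 0 :=
            infDist_frontier_unitSquare_le (gridConfig_mem_unitSquare u)
        _ = 1 / (2 * i) := by simp [gridConfig_apply_zero, gridCoord, hu]
    · let v : Fin i × Fin i := (⟨u.1 - 1, by omega⟩, u.2)
      have hv : v ≠ u := fun h => by
        have := congrArg (fun w : Fin i × Fin i => (w.1 : ℕ)) h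
        simp only [v] at this
        omega
      refine .inr ⟨v, hv, ?_⟩
      rw [norm_gridConfig_sub_of_eq_add_one (a := u.1) (a' := v.1) (by simp only [v]; omega)]
      ring
  · rintro d (rfl | ⟨v, hv, rfl⟩)
    · exact one_div_le_infDist_gridConfig u
    · calc 1 / (2 * i : ℝ) = 1 / 2 * (1 / i) := by ring
        _ ≤ _ := by gcongr; exact one_div_le_norm_gridConfig_sub hv.symm

end Grid

/-- For the `i × i` grid configuration in the unit square
(`i ≥ 1`), every point has `sm`-value `1/(2i)`, the social cost of the grid is
`2i`, and hence the socially optimal cost for `i²` cars in the unit square is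
at most `2i`. -/
theorem gridConfig_sm_and_socialCost (i : ℕ) (hi : 1 ≤ i) :
    (∀ u, smVal (gridConfig i) u = 1 / (2 * i))
      ∧ socialCostSquare (gridConfig i) = 2 * i
      ∧ sInf {c : ℝ | ∃ y : Fin i × Fin i → EuclideanSpace ℝ (Fin 2),
            (∀ u, y u ∈ unitSquare) ∧ c = socialCostSquare y} ≤ 2 * i := by
  have hcost : socialCostSquare (gridConfig i) = 2 * i := by
    have : Nonempty (Fin i × Fin i) := ⟨(⟨0, hi⟩, ⟨0, hi⟩)⟩
    have hi_pos : (0 : ℝ) < i := by exact_mod_cast hi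
    rw [socialCostSquare_eq_iSup_one_div_smVal _ fun u => by rw [smVal_gridConfig]; positivity]
    simp [smVal_gridConfig]
  refine ⟨smVal_gridConfig, hcost,
    csInf_le ⟨0, ?_⟩ ⟨gridConfig i, gridConfig_mem_unitSquare, hcost.symm⟩⟩
  rintro _ ⟨y, -, rfl⟩
  exact socialCostSquare_nonneg y
end
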